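/- Let σ: 𝒜* → ℬ* be a non-erasing monoid morphism and X ⊆ 𝒜^ℤ a subshift. If σ is shift-orbit injective in X, then σ is recognizable for aperiodic points in X: whenever x, x' ∈ X and a non-periodic y ∈ ℬ^ℤ satisfy y = T^k(σ^ℤ(x)) and y = T^ℓ(σ^ℤ(x')) with 0 ≤ k ≤ |σ(x_1)|−1 and 0 ≤ ℓ ≤ |σ(x'_1)|−1 (x_1, x'_1 the letters at index 1), then x = x' and k = ℓ. -/

import Mathlib

open MeasureTheory Filter
open scoped ENNReal

namespace SAdicPaper

universe u v

/-- Biinfinite words over the alphabet `A`. -/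
def ZWord (A : Type u) : Type u := ℤ → A

noncomputable instance {A : Type u} : TopologicalSpace (ZWord A) :=
  @Pi.topologicalSpace ℤ (fun _ => A) (fun _ => ⊥)

instance {A : Type u} : MeasurableSpace (ZWord A) :=
  @MeasurableSpace.pi ℤ (fun _ => A) (fun _ => ⊤)

instance finAddTwoNonempty (n : ℕ) : Nonempty (Fin (n + 2)) := ⟨⟨0, by omega⟩⟩

variable {A : Type u} {B : Type v}

/-- The shift map `T`. -/
def shift (x : ZWord A) : ZWord A := fun i => x (i + 1)

/-- Shift by an arbitrary integer amount. -/
def shiftBy (m : ℤ) (x : ZWord A) : ZWord A := fun i => x (i + m)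

/-- A subshift: a non-empty, closed, shift-invariant set of biinfinite words. -/
def IsSubshift (X : Set (ZWord A)) : Prop :=
  X.Nonempty ∧ IsClosed X ∧ shift '' X = X

/-- The finite subword of `x` of length `n` starting at position `k`. -/
def subword (x : ZWord A) (k : ℤ) (n : ℕ) : List A :=
  (List.range n).map fun i => x (k + i)

/-- The language of finite factors of elements of `X`. -/
def lang (X : Set (ZWord A)) : Set (List A) :=
  { w | ∃ x ∈ X, ∃ k : ℤ, w = subword x k w.length }

/-- The subshift generated by a language. -/
def subshiftGen (L : Set (List A)) : Set (ZWord A) :=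
  { x | ∀ (k : ℤ) (n : ℕ), ∃ u ∈ L, subword x k n <:+: u }

/-- Extension of a letter map `σ : A → List B` to words: the free monoid morphism. -/
def wordMap (σ : A → List B) (w : List A) : List B := (w.map σ).flatten

/-- A morphism is non-erasing if no letter is mapped to the empty word. -/
def NonErasing (σ : A → List B) : Prop := ∀ a, σ a ≠ []

/-- The image subshift `σ(X)`. -/
def imageSubshift (σ : A → List B) (X : Set (ZWord A)) : Set (ZWord B) :=
  subshiftGen (wordMap σ '' lang X)

/-- The position at which the `σ`-image of the letter of `x` at index `n` starts
(the image of the letter at index 1 starts at index 1). -/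
noncomputable def offset (σ : A → List B) (x : ZWord A) (n : ℤ) : ℤ :=
  if 1 ≤ n then 1 + ∑ i ∈ Finset.Ico (1 : ℤ) n, ((σ (x i)).length : ℤ)
  else 1 - ∑ i ∈ Finset.Ico n (1 : ℤ), ((σ (x i)).length : ℤ)

/-- The induced map `σ^ℤ` on biinfinite words. -/
noncomputable def sigmaZ [Nonempty B] (σ : A → List B) (x : ZWord A) : ZWord B := fun j =>
  let n := Classical.epsilon fun n : ℤ => offset σ x n ≤ j ∧ j < offset σ x (n + 1)
  (σ (x n)).getD (j - offset σ x n).toNat (Classical.arbitrary B)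

/-- The cylinder `[w]`: biinfinite words `x` with `x₁ ⋯ x_{|w|} = w`. -/
def cylinder (w : List A) : Set (ZWord A) :=
  { x | ∀ i : Fin w.length, x (((i : ℕ) : ℤ) + 1) = w.get i }

/-- Shift-invariance of a measure. -/
def ShiftInvariantM (μ : Measure (ZWord A)) : Prop :=
  ∀ S : Set (ZWord A), MeasurableSet S → μ (shift ⁻¹' S) = μ S

/-- The cone `ℳ(X)` of shift-invariant finite Borel measures supported in `X`. -/
def measureCone (X : Set (ZWord A)) : Set (Measure (ZWord A)) :=
  { μ | μ Set.univ ≠ ⊤ ∧ ShiftInvariantM μ ∧ μ Xᶜ = 0 }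

/-- The subdivision alphabet `𝒜_σ`. -/
def SubAlph (σ : A → List B) : Type u := Σ a : A, Fin (σ a).length

/-- The subdivision morphism `π_σ`. -/
def subdivMap (σ : A → List B) : A → List (SubAlph σ) :=
  fun a => (List.finRange (σ a).length).map fun k => ⟨a, k⟩

/-- The letter-to-letter map `α_σ` on letters. -/
def letterMap (σ : A → List B) : SubAlph σ → B := fun p => (σ p.1).get p.2

/-- The letter-to-letter morphism `α_σ`. -/
def alphaMap (σ : A → List B) : SubAlph σ → List B := fun p => [letterMap σ p]

/-- The map `α_σ^ℤ` on biinfinite words. -/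
def alphaZ (σ : A → List B) : ZWord (SubAlph σ) → ZWord B := fun y i => letterMap σ (y i)

/-- The measure transfer map `σ^ℳ`: the push-forward under `α_σ` of the
subdivision measure `μ^{π_σ}` (realized concretely on the subdivision full shift). -/
noncomputable def transfer (σ : A → List B) (μ : Measure (ZWord A)) : Measure (ZWord B) :=
  letI := Classical.propDecidable (Nonempty (SubAlph σ))
  if h : Nonempty (SubAlph σ) then
    haveI := h
    Measure.map (alphaZ σ)
      (Measure.sum fun k : ℕ =>
        Measure.map (fun x => shift^[k] (sigmaZ (subdivMap σ) x))
          (μ.restrict { x | k < (σ (x 1)).length }))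
  else 0

/-- Recognizability of `σ` in a subshift `X`. -/
def Recognizable [Nonempty B] (σ : A → List B) (X : Set (ZWord A)) : Prop :=
  ∀ x ∈ X, ∀ x' ∈ X, ∀ k l : ℕ,
    k < (σ (x 1)).length → l < (σ (x' 1)).length →
    shift^[k] (sigmaZ σ x) = shift^[l] (sigmaZ σ x') → x = x' ∧ k = l

/-- `x` and `y` lie in the same shift-orbit. -/
def sameOrbit (x y : ZWord A) : Prop := ∃ m : ℤ, y = shiftBy m x

/-- `σ` is shift-orbit injective in `X`. -/
def ShiftOrbitInjective [Nonempty B] (σ : A → List B) (X : Set (ZWord A)) : Prop :=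
  ∀ x ∈ X, ∀ y ∈ X, (sameOrbit (sigmaZ σ x) (sigmaZ σ y) ↔ sameOrbit x y)

/-- The periodic biinfinite word `w^{±∞}`. -/
def periodicWord (w : List A) (h : w ≠ []) : ZWord A := fun i =>
  w.get ⟨(i % (w.length : ℤ)).toNat, by
    have hl : 0 < w.length := by
      rcases w with _ | ⟨a, t⟩
      · exact absurd rfl h
      · simp
    have h1 : 0 ≤ i % (w.length : ℤ) := Int.emod_nonneg i (by exact_mod_cast hl.ne')
    have h2 : i % (w.length : ℤ) < (w.length : ℤ) := Int.emod_lt_of_pos i (by exact_mod_cast hl)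
    omega⟩

/-- A word is a proper power if `w = u^m` for some `m ≥ 2`. -/
def IsProperPower (w : List A) : Prop :=
  ∃ (u : List A) (m : ℕ), 2 ≤ m ∧ w = (List.replicate m u).flatten

/-- `σ` is shift-period preserving in `X`. -/
def ShiftPeriodPreserving (σ : A → List B) (X : Set (ZWord A)) : Prop :=
  ∀ (w : List A) (h : w ≠ []), periodicWord w h ∈ X →
    (IsProperPower w ↔ IsProperPower (wordMap σ w))

/-- The incidence matrix `M(σ)` of a morphism. -/
noncomputable def incidence (σ : A → List B) : Matrix B A ℝ :=
  letI := Classical.decEq B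
  Matrix.of fun b a => ((σ a).count b : ℝ)

/-- The number `|u|_w` of occurrences of `w` as a factor of `u`. -/
noncomputable def occ (w u : List A) : ℕ :=
  letI := Classical.decEq A
  ((List.range (u.length + 1)).filter fun i => decide ((u.drop i).take w.length = w)).length

/-- A minimal subshift. -/
def IsMinimalSubshift (X : Set (ZWord A)) : Prop :=
  IsSubshift X ∧ ∀ Y, Y ⊆ X → IsSubshift Y → Y = X

/-- A shift-invariant probability measure. -/
def IsProbInvariant (μ : Measure (ZWord A)) : Prop :=
  ShiftInvariantM μ ∧ μ Set.univ = 1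

/-- An ergodic shift-invariant probability measure: not a positive linear combination
of two distinct shift-invariant probability measures. -/
def IsErgodicMeasure (μ : Measure (ZWord A)) : Prop :=
  IsProbInvariant μ ∧
    ∀ ν₁ ν₂ : Measure (ZWord A), IsProbInvariant ν₁ → IsProbInvariant ν₂ →
      ∀ c₁ c₂ : ℝ≥0∞, 0 < c₁ → 0 < c₂ → μ = c₁ • ν₁ + c₂ • ν₂ → ν₁ = ν₂

/-- Aperiodicity: no shift-periodic word in `X`. -/
def Aperiodic (X : Set (ZWord A)) : Prop :=
  ∀ x ∈ X, ∀ p : ℕ, 0 < p → shift^[p] x ≠ x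

/-- Unique ergodicity of a subshift `X`. -/
def UniquelyErgodic (X : Set (ZWord A)) : Prop :=
  ∃! μ : Measure (ZWord A), IsErgodicMeasure μ ∧ μ ∈ measureCone X

/-- The complexity function `p_X(n)`. -/
noncomputable def complexity (X : Set (ZWord A)) (n : ℕ) : ℕ :=
  Set.ncard { w : List A | w ∈ lang X ∧ w.length = n }

/-- The letter frequency vector of a measure. -/
noncomputable def freqMap (μ : Measure (ZWord A)) : A → ℝ := fun a => (μ (cylinder [a])).toReal

/-- The letter frequency cone `𝒞(X)`. -/
def letterFreqCone (X : Set (ZWord A)) : Set (A → ℝ) := freqMap '' measureCone X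

/-- A primitive substitution: some power of the incidence matrix is positive. -/
def Primitive (τ : A → List A) : Prop :=
  ∃ p : ℕ, 0 < p ∧ ∀ a b : A, b ∈ (wordMap τ)^[p] [a]

/-- The substitutive subshift of a substitution. -/
def substitutiveSubshift (τ : A → List A) : Set (ZWord A) :=
  { x | ∀ (k : ℤ) (m : ℕ), ∃ (p : ℕ) (a : A), 1 ≤ p ∧ subword x k m <:+: (wordMap τ)^[p] [a] }

section Directive

variable {𝒜 : ℕ → Type u}

/-- The telescoped morphism `σ_{[0,n)}`, on letters. -/
def teleW (σ : ∀ n, 𝒜 (n+1) → List (𝒜 n)) : (n : ℕ) → 𝒜 n → List (𝒜 0)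
  | 0, a => [a]
  | n+1, a => wordMap (teleW σ n) (σ n a)

/-- The telescoped morphism `σ_{[k,k+m)}`, on letters. -/
def teleWFrom (σ : ∀ n, 𝒜 (n+1) → List (𝒜 n)) (k : ℕ) : (m : ℕ) → 𝒜 (k + m) → List (𝒜 k)
  | 0, a => [a]
  | m+1, a => wordMap (teleWFrom σ k m) (σ (k + m) a)

/-- An everywhere growing directive sequence. -/
def EverywhereGrowing (σ : ∀ n, 𝒜 (n+1) → List (𝒜 n)) : Prop :=
  ∀ N : ℕ, ∃ n₀ : ℕ, ∀ n, n₀ ≤ n → ∀ a : 𝒜 n, N ≤ (teleW σ n a).length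

/-- The subshift generated by a directive sequence. -/
def genSubshift (σ : ∀ n, 𝒜 (n+1) → List (𝒜 n)) : Set (ZWord (𝒜 0)) :=
  { x | ∀ (k : ℤ) (m : ℕ), ∃ n : ℕ, 1 ≤ n ∧ ∃ a : 𝒜 n, subword x k m <:+: teleW σ n a }

/-- The level-`k` subshift of a directive sequence. -/
def levelSubshift (σ : ∀ n, 𝒜 (n+1) → List (𝒜 n)) (k : ℕ) : Set (ZWord (𝒜 k)) :=
  genSubshift (𝒜 := fun n => 𝒜 (k + n)) (fun n => σ (k + n))

/-- A vector tower on a directive sequence. -/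
def IsVectorTower [∀ n, Fintype (𝒜 n)] (σ : ∀ n, 𝒜 (n+1) → List (𝒜 n))
    (v : ∀ n, 𝒜 n → ℝ) : Prop :=
  (∀ n a, 0 ≤ v n a) ∧ ∀ n, v n = (incidence (σ n)).mulVec (v (n+1))

/-- `μ = 𝔪(v)` is the invariant measure on the generated subshift obtained by
evaluating the vector tower `v`. -/
def IsTowerMeasure [∀ n, Fintype (𝒜 n)] (σ : ∀ n, 𝒜 (n+1) → List (𝒜 n))
    (v : ∀ n, 𝒜 n → ℝ) (μ : Measure (ZWord (𝒜 0))) : Prop :=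
  μ ∈ measureCone (genSubshift σ) ∧
    ∀ w : List (𝒜 0),
      Tendsto (fun n => ∑ a : 𝒜 n, v n a * (occ w (teleW σ n a) : ℝ)) atTop
        (nhds ((μ (cylinder w)).toReal))

/-- A measure tower on a directive sequence. -/
def IsMeasureTower (σ : ∀ n, 𝒜 (n+1) → List (𝒜 n))
    (μs : ∀ n, Measure (ZWord (𝒜 n))) : Prop :=
  (∀ n, μs n ∈ measureCone (Set.univ : Set (ZWord (𝒜 n)))) ∧
    ∀ n, μs n = transfer (σ n) (μs (n+1))

/-- The intermediate letter frequency cone `𝒞_n`. -/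
def freqConeAt [∀ n, Fintype (𝒜 n)] (σ : ∀ n, 𝒜 (n+1) → List (𝒜 n)) (n : ℕ) :
    Set (𝒜 n → ℝ) :=
  ⋂ m : ℕ, (incidence (teleWFrom σ n (m+1))).mulVec '' { v | ∀ a, 0 ≤ v a }

/-- The dimension `c_n` of the intermediate letter frequency cone. -/
noncomputable def dimC [∀ n, Fintype (𝒜 n)] (σ : ∀ n, 𝒜 (n+1) → List (𝒜 n)) (n : ℕ) : ℕ :=
  Module.finrank ℝ (Submodule.span ℝ (freqConeAt σ n))

end Directive

section Prolong

variable {B : Type u} {𝒜 : ℕ → Type u}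

/-- Alphabets of the prolonged directive sequence `⃖σ^τ`. -/
def prolongA (B : Type u) (𝒜 : ℕ → Type u) : ℕ → Type u
  | 0 => B
  | n+1 => 𝒜 n

instance prolongAFintype [Fintype B] [∀ n, Fintype (𝒜 n)] :
    ∀ n, Fintype (prolongA B 𝒜 n)
  | 0 => inferInstanceAs (Fintype B)
  | n+1 => inferInstanceAs (Fintype (𝒜 n))

/-- The prolonged directive sequence `⃖σ^τ`. -/
def prolongSeq (τ : 𝒜 0 → List B) (σ : ∀ n, 𝒜 (n+1) → List (𝒜 n)) :
    ∀ n, prolongA B 𝒜 (n+1) → List (prolongA B 𝒜 n)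
  | 0 => τ
  | n+1 => σ n

/-- The prolonged vector tower `⃖v^τ`. -/
noncomputable def prolongTower [Fintype (𝒜 0)] (τ : 𝒜 0 → List B) (v : ∀ n, 𝒜 n → ℝ) :
    ∀ n, prolongA B 𝒜 n → ℝ
  | 0 => (incidence τ).mulVec (v 0)
  | n+1 => v n

end Prolong

/-- The morphism `τ_d : 𝒜_{d+1}* → 𝒜_d*`, `a_i ↦ a_i a_i` (i ≤ d), `a_{d+1} ↦ a_1 ⋯ a_d`. -/
def tauMap (d : ℕ) : Fin (d+1) → List (Fin d) := fun i =>
  if h : (i : ℕ) < d then [⟨i, h⟩, ⟨i, h⟩] else List.ofFn (fun j : Fin d => j)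

/-- Sizes of the alphabets of the alternating sequence `σ₂ ∘ τ₂ ∘ σ₃ ∘ τ₃ ∘ ⋯`. -/
def sz (n : ℕ) : ℕ := n / 2 + 2

/-- The alternating directive sequence `σ₂ ∘ τ₂ ∘ σ₃ ∘ τ₃ ∘ ⋯`. -/
def altSeq (σfam : ∀ d, Fin d → List (Fin d)) (n : ℕ) : Fin (sz (n+1)) → List (Fin (sz n)) :=
  fun a =>
    if h : n % 2 = 0 then
      σfam (sz n) (Fin.cast (by simp only [sz]; omega) a)
    else
      tauMap (sz n) (Fin.cast (by simp only [sz]; omega) a)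

/-!
Shift-orbit injectivity turns `T^k σ^ℤ(x) = T^l σ^ℤ(x')` into `x' = T^m x`, and
`σ^ℤ(T^m x) = T^c σ^ℤ(x)` where `c + 1` is the position at which the image of `x_{m+1}` starts.
Aperiodicity of `T^k σ^ℤ(x)` then forces `k - l = c`; since positions of images of letters are
strictly increasing, `0 ≤ k < |σ(x_1)|` and `0 ≤ l < |σ(x_{m+1})|` leave only `m = 0`.
-/

lemma shiftBy_shiftBy (a b : ℤ) (x : ZWord A) : shiftBy a (shiftBy b x) = shiftBy (a + b) x := by
  funext i
  simp only [shiftBy, add_assoc]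

@[simp]
lemma shiftBy_zero (x : ZWord A) : shiftBy 0 x = x := by
  funext i
  simp only [shiftBy, add_zero]

lemma shiftBy_eq_shiftBy_iff {a b : ℤ} {y z : ZWord A} :
    shiftBy a y = shiftBy b z ↔ z = shiftBy (a - b) y := by
  constructor
  · intro h
    have := congrArg (shiftBy (-b)) h
    rwa [shiftBy_shiftBy, shiftBy_shiftBy, neg_add_cancel, shiftBy_zero, neg_add_eq_sub,
      eq_comm] at this
  · rintro rfl
    rw [shiftBy_shiftBy, add_sub_cancel]

lemma iterate_shift (k : ℕ) (x : ZWord A) : shift^[k] x = shiftBy k x := by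
  induction k with
  | zero => simp
  | succ k ih =>
    rw [Function.iterate_succ_apply', ih]
    funext i
    simp only [shift, shiftBy, Nat.cast_succ, add_assoc, add_comm 1 (k : ℤ)]

lemma eq_zero_of_shiftBy_eq_self {y : ZWord A} (hy : ∀ p : ℕ, 0 < p → shift^[p] y ≠ y)
    {d : ℤ} (hd : shiftBy d y = y) : d = 0 := by
  have hpos : ∀ d : ℤ, 0 < d → shiftBy d y ≠ y := fun d h hd => by
    refine hy d.toNat (by omega) ?_
    rwa [iterate_shift, Int.toNat_of_nonneg h.le]
  rcases lt_trichotomy d 0 with h | h | h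
  · refine absurd ?_ (hpos (-d) (by omega))
    conv_lhs => rw [← hd]
    rw [shiftBy_shiftBy, neg_add_cancel, shiftBy_zero]
  · exact h
  · exact absurd hd (hpos d h)

section Offset

variable (σ : A → List B) (x : ZWord A)

lemma offset_of_le_one {n : ℤ} (hn : n ≤ 1) :
    offset σ x n = 1 - ∑ i ∈ Finset.Ico n 1, ((σ (x i)).length : ℤ) := by
  rcases hn.lt_or_eq with hn | rfl
  · simp [offset, not_le.mpr hn]
  · simp [offset]

@[simp]
lemma offset_one : offset σ x 1 = 1 := by
  simp [offset]

lemma offset_add_one (n : ℤ) :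
    offset σ x (n + 1) = offset σ x n + ((σ (x n)).length : ℤ) := by
  rcases le_or_gt 1 n with hn | hn
  · rw [offset, offset, if_pos (by omega), if_pos hn, ← Order.succ_eq_add_one,
      ← Finset.insert_Ico_right_eq_Ico_succ hn, Finset.sum_insert Finset.right_notMem_Ico]
    ring
  · rw [offset_of_le_one σ x hn, offset_of_le_one σ x hn.le,
      ← Finset.insert_Ico_succ_left_eq_Ico hn, Finset.sum_insert (by simp), Order.succ_eq_add_one]
    ring

lemma eq_offset_of_add_one {f : ℤ → ℤ} (h1 : f 1 = 1)
    (hsucc : ∀ n, f (n + 1) = f n + ((σ (x n)).length : ℤ)) (n : ℤ) : f n = offset σ x n := by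
  induction n using Int.inductionOn' (b := 1) with
  | zero => rw [h1, offset_one]
  | succ k _ ih => rw [hsucc, offset_add_one, ih]
  | pred k _ ih =>
    have h := hsucc (k - 1)
    rw [sub_add_cancel, ih, ← sub_add_cancel k 1, offset_add_one, sub_add_cancel] at h
    omega

lemma offset_shiftBy (m n : ℤ) :
    offset σ (shiftBy m x) n = offset σ x (n + m) - (offset σ x (m + 1) - 1) := by
  refine (eq_offset_of_add_one σ (shiftBy m x)
    (f := fun n => offset σ x (n + m) - (offset σ x (m + 1) - 1)) ?_ (fun n => ?_) n).symm
  · rw [add_comm]; ring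
  · rw [add_right_comm, offset_add_one]
    simp only [shiftBy]
    ring

variable {σ}

lemma monotone_offset_sub_id (hσ : NonErasing σ) : Monotone fun n => offset σ x n - n :=
  monotone_int_of_le_succ fun n => by
    rw [offset_add_one]
    have := List.length_pos_iff.mpr (hσ (x n))
    omega

lemma offset_strictMono (hσ : NonErasing σ) : StrictMono (offset σ x) := fun a b hab => by
  have := monotone_offset_sub_id x hσ hab.le
  dsimp only at this
  omega

lemma existsUnique_offset_le_lt (hσ : NonErasing σ) (j : ℤ) :
    ∃! n, offset σ x n ≤ j ∧ j < offset σ x (n + 1) := by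
  have hmono := monotone_offset_sub_id x hσ
  have hbdd : ∀ n, offset σ x n ≤ j → n ≤ max j 1 := fun n hn => by
    by_contra! h
    have := hmono (show 1 ≤ n by omega)
    simp only [offset_one] at this
    omega
  have hne : offset σ x (min j 1) ≤ j := by
    have := hmono (min_le_right j 1)
    simp only [offset_one] at this
    omega
  obtain ⟨n, hn, hmax⟩ := Int.exists_greatest_of_bdd ⟨_, hbdd⟩ ⟨_, hne⟩
  refine ⟨n, ⟨hn, not_le.mp fun h => by simpa using hmax _ h⟩, fun n' ⟨h1, h2⟩ => ?_⟩
  have hle := hmax n' h1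
  by_contra hne'
  have := (offset_strictMono x hσ).monotone (show n' + 1 ≤ n by omega)
  omega

lemma sigmaZ_apply [Nonempty B] (hσ : NonErasing σ) {j n : ℤ}
    (h1 : offset σ x n ≤ j) (h2 : j < offset σ x (n + 1)) :
    sigmaZ σ x j = (σ (x n)).getD (j - offset σ x n).toNat (Classical.arbitrary B) := by
  have hε := Classical.epsilon_spec (p := fun n => offset σ x n ≤ j ∧ j < offset σ x (n + 1))
    ⟨n, h1, h2⟩
  rw [sigmaZ, (existsUnique_offset_le_lt x hσ j).unique hε ⟨h1, h2⟩]

end Offset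

lemma sigmaZ_shiftBy [Nonempty B] {σ : A → List B} (hσ : NonErasing σ) (x : ZWord A) (m : ℤ) :
    sigmaZ σ (shiftBy m x) = shiftBy (offset σ x (m + 1) - 1) (sigmaZ σ x) := by
  funext j
  obtain ⟨n, ⟨h1, h2⟩, -⟩ := existsUnique_offset_le_lt (shiftBy m x) hσ j
  have h1' : offset σ x (n + m) ≤ j + (offset σ x (m + 1) - 1) := by
    rw [offset_shiftBy] at h1; omega
  have h2' : j + (offset σ x (m + 1) - 1) < offset σ x (n + m + 1) := by
    rw [offset_shiftBy, add_right_comm] at h2; omega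
  change sigmaZ σ (shiftBy m x) j = sigmaZ σ x (j + (offset σ x (m + 1) - 1))
  rw [sigmaZ_apply _ hσ h1 h2, sigmaZ_apply _ hσ h1' h2', offset_shiftBy]
  congr 2
  omega

theorem recognizable_for_aperiodic_points_of_shiftOrbitInjective_general {A : Type u} {B : Type v}
    [Nonempty B]
    (σ : A → List B) (hσ : NonErasing σ)
    (X : Set (ZWord A))
    (hinj : ShiftOrbitInjective σ X) :
    ∀ x ∈ X, ∀ x' ∈ X, ∀ k l : ℕ,
      k < (σ (x 1)).length → l < (σ (x' 1)).length →
      (∀ p : ℕ, 0 < p → shift^[p] (shift^[k] (sigmaZ σ x)) ≠ shift^[k] (sigmaZ σ x)) →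
      shift^[k] (sigmaZ σ x) = shift^[l] (sigmaZ σ x') → x = x' ∧ k = l := by
  intro x hx x' hx' k l hk hl hap heq
  rw [iterate_shift, iterate_shift] at heq
  obtain ⟨m, rfl⟩ := (hinj x hx x' hx').mp ⟨_, shiftBy_eq_shiftBy_iff.mp heq⟩
  rw [sigmaZ_shiftBy hσ] at heq
  have hper : shiftBy (l + (offset σ x (m + 1) - 1) - k) (shift^[k] (sigmaZ σ x)) =
      shift^[k] (sigmaZ σ x) := by
    rw [iterate_shift, shiftBy_shiftBy, heq, shiftBy_shiftBy, sub_add_cancel]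
  have hkl := eq_zero_of_shiftBy_eq_self hap hper
  have hl' : l < (σ (x (m + 1))).length := by rw [add_comm]; exact hl
  have hm_lt : m + 1 < 1 + 1 := (offset_strictMono x hσ).lt_iff_lt.mp <| by
    rw [offset_add_one σ x 1, offset_one]; omega
  have hm_gt : 1 < m + 1 + 1 := (offset_strictMono x hσ).lt_iff_lt.mp <| by
    rw [offset_add_one σ x (m + 1), offset_one]; omega
  obtain rfl : m = 0 := by omega
  simp only [zero_add, offset_one] at hkl
  exact ⟨(shiftBy_zero x).symm, by omega⟩

/-- If a non-erasing morphism `σ : 𝒜* → ℬ*` is shift-orbit injective in a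
subshift `X ⊆ 𝒜^ℤ`, then `σ` is recognizable for aperiodic points in `X`. -/
theorem recognizable_for_aperiodic_points_of_shiftOrbitInjective {A : Type u} {B : Type v}
    [Nonempty B]
    (σ : A → List B) (hσ : NonErasing σ)
    (X : Set (ZWord A)) (hX : IsSubshift X)
    (hinj : ShiftOrbitInjective σ X) :
    ∀ x ∈ X, ∀ x' ∈ X, ∀ k l : ℕ,
      k < (σ (x 1)).length → l < (σ (x' 1)).length →
      (∀ p : ℕ, 0 < p → shift^[p] (shift^[k] (sigmaZ σ x)) ≠ shift^[k] (sigmaZ σ x)) →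
      shift^[k] (sigmaZ σ x) = shift^[l] (sigmaZ σ x') → x = x' ∧ k = l :=
  recognizable_for_aperiodic_points_of_shiftOrbitInjective_general σ hσ X hinj

end SAdicPaper
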